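/- Let (A,μ) be a Jordan algebra over K and V a Jordan A-bimodule with structure maps ρ_l: A×V→V and ρ_r: V×A→V. Let α,β be commuting algebra endomorphisms of (A,μ) and φ,ψ commuting linear self-maps of V satisfying φ(ρ_l(x,v)) = ρ_l(α(x),φ(v)), φ(ρ_r(v,x)) = ρ_r(φ(v),α(x)), ψ(ρ_l(x,v)) = ρ_l(β(x),ψ(v)), and ψ(ρ_r(v,x)) = ρ_r(ψ(v),β(x)). Then the maps ρ̃_l(x,v) = ρ_l(α(x),ψ(v)) and ρ̃_r(v,x) = ρ_r(φ(v),β(x)) give the BiHom-module (V,φ,ψ) the structure of a BiHom-Jordan A_{α,β}-bimodule, where A_{α,β} = (A,μ_{α,β},α,β) with μ_{α,β}(x,y) = μ(α(x),β(y)) is a BiHom-Jordan algebra. -/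
import Mathlib


open TensorProduct

/-- A two-argument map is `K`-bilinear. -/
def IsBilin (K : Type*) {M N P : Type*} [Field K]
    [AddCommGroup M] [Module K M] [AddCommGroup N] [Module K N]
    [AddCommGroup P] [Module K P] (f : M → N → P) : Prop :=
  (∀ m, IsLinearMap K (f m)) ∧ (∀ n, IsLinearMap K (fun m => f m n))

/-- The BiHom-associator of a BiHom-algebra. -/
def biHomAssoc {A : Type*} [AddCommGroup A]
    (μ : A → A → A) (α β : A → A) (x y z : A) : A :=
  μ (μ x y) (β z) - μ (α x) (μ y z)

/-- BiHom-alternative algebra: multiplicative BiHom-algebra satisfying the left and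
right BiHom-alternative identities. -/
def IsBiHomAlternative (K : Type*) {A : Type*} [Field K]
    [AddCommGroup A] [Module K A]
    (μ : A → A → A) (α β : A → A) : Prop :=
  IsBilin K μ ∧ IsLinearMap K α ∧ IsLinearMap K β ∧
  (∀ x, α (β x) = β (α x)) ∧
  (∀ x y, α (μ x y) = μ (α x) (α y)) ∧
  (∀ x y, β (μ x y) = μ (β x) (β y)) ∧
  (∀ x y z, biHomAssoc μ α β (β x) (α y) z + biHomAssoc μ α β (β y) (α x) z = 0) ∧
  (∀ x y z, biHomAssoc μ α β x (β y) (α z) + biHomAssoc μ α β x (β z) (α y) = 0)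

/-- BiHom-associative algebra. -/
def IsBiHomAssociative (K : Type*) {A : Type*} [Field K]
    [AddCommGroup A] [Module K A]
    (μ : A → A → A) (α β : A → A) : Prop :=
  IsBilin K μ ∧ IsLinearMap K α ∧ IsLinearMap K β ∧
  (∀ x, α (β x) = β (α x)) ∧
  (∀ x y, α (μ x y) = μ (α x) (α y)) ∧
  (∀ x y, β (μ x y) = μ (β x) (β y)) ∧
  (∀ x y z, biHomAssoc μ α β x y z = 0)

/-- BiHom-Jordan algebra: multiplicative, BiHom-commutative and satisfying the
BiHom-Jordan identity. -/
def IsBiHomJordan (K : Type*) {A : Type*} [Field K]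
    [AddCommGroup A] [Module K A]
    (μ : A → A → A) (α β : A → A) : Prop :=
  IsBilin K μ ∧ IsLinearMap K α ∧ IsLinearMap K β ∧
  (∀ x, α (β x) = β (α x)) ∧
  (∀ x y, α (μ x y) = μ (α x) (α y)) ∧
  (∀ x y, β (μ x y) = μ (β x) (β y)) ∧
  (∀ x y, μ (β x) (α y) = μ (β y) (α x)) ∧
  (∀ x y, biHomAssoc μ α β (μ (β (β x)) (α (β x))) (α (α (β y))) (α (α (α x))) = 0)

/-- Module BiHom-associator, arguments (v, x, y) with v ∈ V, x, y ∈ A. -/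
def asVr {A V : Type*} [AddCommGroup A] [AddCommGroup V]
    (μ : A → A → A) (β : A → A) (φ : V → V) (ρr : V → A → V)
    (v : V) (x y : A) : V :=
  ρr (ρr v x) (β y) - ρr (φ v) (μ x y)

/-- Module BiHom-associator, arguments (x, v, y) with x, y ∈ A, v ∈ V. -/
def asVm {A V : Type*} [AddCommGroup A] [AddCommGroup V]
    (α β : A → A) (ρl : A → V → V) (ρr : V → A → V)
    (x : A) (v : V) (y : A) : V :=
  ρr (ρl x v) (β y) - ρl (α x) (ρr v y)

/-- Module BiHom-associator, arguments (x, y, v) with x, y ∈ A, v ∈ V. -/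
def asVl {A V : Type*} [AddCommGroup A] [AddCommGroup V]
    (μ : A → A → A) (α : A → A) (ψ : V → V) (ρl : A → V → V)
    (x y : A) (v : V) : V :=
  ρl (μ x y) (ψ v) - ρl (α x) (ρl y v)

/-- (V, φ, ψ) together with ρl, ρr is an A-bimodule in the BiHom-module sense:
the structure maps are bilinear morphisms of BiHom-modules. -/
def AreBiHomStructureMaps (K : Type*) {A V : Type*} [Field K]
    [AddCommGroup A] [Module K A] [AddCommGroup V] [Module K V]
    (α β : A → A) (φ ψ : V → V) (ρl : A → V → V) (ρr : V → A → V) : Prop :=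
  IsBilin K ρl ∧ IsBilin K ρr ∧ IsLinearMap K φ ∧ IsLinearMap K ψ ∧
  (∀ v, φ (ψ v) = ψ (φ v)) ∧
  (∀ x v, φ (ρl x v) = ρl (α x) (φ v)) ∧
  (∀ x v, ψ (ρl x v) = ρl (β x) (ψ v)) ∧
  (∀ v x, φ (ρr v x) = ρr (φ v) (α x)) ∧
  (∀ v x, ψ (ρr v x) = ρr (ψ v) (β x))

/-- BiHom-alternative bimodule over a BiHom-alternative algebra. -/
def IsBiHomAlternativeBimodule (K : Type*) {A V : Type*} [Field K]
    [AddCommGroup A] [Module K A] [AddCommGroup V] [Module K V]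
    (μ : A → A → A) (α β : A → A) (φ ψ : V → V)
    (ρl : A → V → V) (ρr : V → A → V) : Prop :=
  AreBiHomStructureMaps K α β φ ψ ρl ρr ∧
  (∀ x v, asVl μ α ψ ρl (β x) (α x) v = 0) ∧
  (∀ x v, asVr μ β φ ρr v (β x) (α x) = 0) ∧
  (∀ x y v, asVm α β ρl ρr (β x) (φ v) y = - asVr μ β φ ρr (ψ v) (α x) y) ∧
  (∀ x y v, asVl μ α ψ ρl y (β x) (φ v) = - asVm α β ρl ρr y (ψ v) (α x))

/-- BiHom-Jordan bimodule over a BiHom-Jordan algebra. -/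
def IsBiHomJordanBimodule (K : Type*) {A V : Type*} [Field K]
    [AddCommGroup A] [Module K A] [AddCommGroup V] [Module K V]
    (μ : A → A → A) (α β : A → A) (φ ψ : V → V)
    (ρl : A → V → V) (ρr : V → A → V) : Prop :=
  AreBiHomStructureMaps K α β φ ψ ρl ρr ∧
  (∀ x v, ρl (β x) (φ v) = ρr (ψ v) (α x)) ∧
  (∀ x y z v,
    asVm α β ρl ρr (μ (β (β x)) (α (β y))) (φ (φ (ψ v))) (α (α (α z)))
    + asVm α β ρl ρr (μ (β (β y)) (α (β z))) (φ (φ (ψ v))) (α (α (α x)))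
    + asVm α β ρl ρr (μ (β (β z)) (α (β x))) (φ (φ (ψ v))) (α (α (α y))) = 0) ∧
  (∀ x y z v,
    asVr μ β φ ρr (ρr (ψ (ψ v)) (β (α x))) (β (α (α y))) (α (α (α z)))
    + asVr μ β φ ρr (ρr (ψ (ψ v)) (β (α z))) (β (α (α y))) (α (α (α x)))
    + asVl μ α ψ ρl (μ (β (β x)) (β (α z))) (β (α (α y))) (φ (φ (φ v))) = 0)

/-- Right BiHom-Jordan module. -/
def IsRightBiHomJordanModule (K : Type*) {A V : Type*} [Field K]
    [AddCommGroup A] [Module K A] [AddCommGroup V] [Module K V]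
    (μ : A → A → A) (α β : A → A) (φ ψ : V → V) (ρr : V → A → V) : Prop :=
  IsBilin K ρr ∧
  (∀ v x, φ (ρr v x) = ρr (φ v) (α x)) ∧
  (∀ v x, ψ (ρr v x) = ρr (ψ v) (β x)) ∧
  (∀ x y z v,
    (ρr (ρr (φ (ψ (ψ v))) (μ (α (β x)) (α (α y)))) (β (α (α (α z))))
      - ρr (ρr (φ (ψ (ψ v))) (β (α (α z)))) (μ (α (α (β x))) (α (α (α y)))))
    + (ρr (ρr (φ (ψ (ψ v))) (μ (α (β y)) (α (α z)))) (β (α (α (α x))))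
      - ρr (ρr (φ (ψ (ψ v))) (β (α (α x)))) (μ (α (α (β y))) (α (α (α z)))))
    + (ρr (ρr (φ (ψ (ψ v))) (μ (α (β z)) (α (α x)))) (β (α (α (α y))))
      - ρr (ρr (φ (ψ (ψ v))) (β (α (α y)))) (μ (α (α (β z))) (α (α (α x))))) = 0) ∧
  (∀ x y z v,
    ρr (ρr (ρr (ψ (ψ v)) (β (α x))) (β (α (α y)))) (β (α (α (α z))))
    + ρr (ρr (ρr (ψ (ψ v)) (β (α z))) (β (α (α y)))) (β (α (α (α x))))
    + ρr (φ (φ (ψ (ψ v)))) (μ (μ (β (α x)) (α (α z))) (α (α (α y))))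
    = ρr (ρr (φ (ψ (ψ v))) (β (α (α x)))) (μ (β (α (α y))) (α (α (α z))))
    + ρr (ρr (φ (ψ (ψ v))) (β (α (α z)))) (μ (β (α (α y))) (α (α (α x))))
    + ρr (ρr (φ (ψ (ψ v))) (β (α (α y)))) (μ (α (α (β x))) (α (α (α z)))))

/-- Left BiHom-Jordan module (with a chosen inverse `ψinv` of `ψ`). -/
def IsLeftBiHomJordanModule (K : Type*) {A V : Type*} [Field K]
    [AddCommGroup A] [Module K A] [AddCommGroup V] [Module K V]
    (μ : A → A → A) (α β : A → A) (φ ψ ψinv : V → V) (ρl : A → V → V) : Prop :=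
  IsBilin K ρl ∧
  (∀ x v, φ (ρl x v) = ρl (α x) (φ v)) ∧
  (∀ x v, ψ (ρl x v) = ρl (β x) (ψ v)) ∧
  (∀ v, ψ (ψinv v) = v) ∧ (∀ v, ψinv (ψ v) = v) ∧
  (∀ x y z v,
    (ρl (β (β (α (α z)))) (ρl (μ (α (β x)) (α (α y))) (φ (φ (φ v))))
      - ρl (μ (α (β (β x))) (α (α (β y)))) (ρl (β (α (α z))) (φ (φ (φ v)))))
    + (ρl (β (β (α (α x)))) (ρl (μ (α (β y)) (α (α z))) (φ (φ (φ v))))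
      - ρl (μ (α (β (β y))) (α (α (β z)))) (ρl (β (α (α x))) (φ (φ (φ v)))))
    + (ρl (β (β (α (α y)))) (ρl (μ (α (β z)) (α (α x))) (φ (φ (φ v))))
      - ρl (μ (α (β (β z))) (α (α (β x)))) (ρl (β (α (α y))) (φ (φ (φ v))))) = 0) ∧
  (∀ x y z v,
    ρl (β (β (α (α z)))) (ρl (β (α (α y))) (ρl (α (α x)) (ψinv (φ (φ (φ v))))))
    + ρl (β (β (α (α x)))) (ρl (β (α (α y))) (ρl (α (α z)) (ψinv (φ (φ (φ v))))))
    + ρl (μ (μ (β (β x)) (β (α z))) (β (α (α y)))) (φ (φ (φ (ψ v))))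
    = ρl (μ (β (β (α y))) (β (α (α z)))) (ρl (β (α (α x))) (φ (φ (φ v))))
    + ρl (μ (β (β (α y))) (β (α (α x)))) (ρl (β (α (α z))) (φ (φ (φ v))))
    + ρl (μ (β (β (α x))) (β (α (α z)))) (ρl (β (α (α y))) (φ (φ (φ v)))))

/-- Right special BiHom-Jordan module. -/
def IsRightSpecialBiHomJordanModule (K : Type*) {A V : Type*} [Field K]
    [AddCommGroup A] [Module K A] [AddCommGroup V] [Module K V]
    (μ : A → A → A) (α β : A → A) (φ ψ : V → V) (ρr : V → A → V) : Prop :=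
  IsBilin K ρr ∧
  (∀ v x, φ (ρr v x) = ρr (φ v) (α x)) ∧
  (∀ v x, ψ (ρr v x) = ρr (ψ v) (β x)) ∧
  (∀ x y v, ρr (φ v) (μ (β x) (α y))
      = ρr (ρr v (β x)) (β (α y)) + ρr (ρr v (β y)) (α (β x)))

/-- Left special BiHom-Jordan module. -/
def IsLeftSpecialBiHomJordanModule (K : Type*) {A V : Type*} [Field K]
    [AddCommGroup A] [Module K A] [AddCommGroup V] [Module K V]
    (μ : A → A → A) (α β : A → A) (φ ψ : V → V) (ρl : A → V → V) : Prop :=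
  IsBilin K ρl ∧
  (∀ x v, φ (ρl x v) = ρl (α x) (φ v)) ∧
  (∀ x v, ψ (ρl x v) = ρl (β x) (ψ v)) ∧
  (∀ x y v, ρl (μ (β x) (α y)) (ψ v)
      = ρl (β (α x)) (ρl (α y) v) + ρl (β (α y)) (ρl (α x) v))

/-- Jordan algebra: commutative bilinear product satisfying ((xx)y)x = (xx)(yx). -/
def IsJordanAlg (K : Type*) {A : Type*} [Field K] [AddCommGroup A] [Module K A]
    (μ : A → A → A) : Prop :=
  IsBilin K μ ∧ (∀ x y, μ x y = μ y x) ∧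
  (∀ x y, μ (μ (μ x x) y) x = μ (μ x x) (μ y x))

/-- Jordan bimodule (untwisted), expressed via the module associators with
identity twisting maps. -/
def IsJordanBimodule (K : Type*) {A V : Type*} [Field K]
    [AddCommGroup A] [Module K A] [AddCommGroup V] [Module K V]
    (μ : A → A → A) (ρl : A → V → V) (ρr : V → A → V) : Prop :=
  IsBilin K ρl ∧ IsBilin K ρr ∧
  (∀ x v, ρl x v = ρr v x) ∧
  (∀ x y z v,
    asVm (id : A → A) id ρl ρr (μ x y) v z
    + asVm (id : A → A) id ρl ρr (μ y z) v x
    + asVm (id : A → A) id ρl ρr (μ z x) v y = 0) ∧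
  (∀ x y z v,
    asVr μ (id : A → A) (id : V → V) ρr (ρr v x) y z
    + asVr μ (id : A → A) (id : V → V) ρr (ρr v z) y x
    + asVl μ (id : A → A) (id : V → V) ρl (μ x z) y v = 0)

/-- Composing a bilinear map with linear maps in each argument is bilinear. -/
lemma isBilin_comp (K : Type*) {M N P : Type*} [Field K]
    [AddCommGroup M] [Module K M] [AddCommGroup N] [Module K N]
    [AddCommGroup P] [Module K P] {f : M → N → P} (hf : IsBilin K f)
    {g : M → M} (hg : IsLinearMap K g) {h : N → N} (hh : IsLinearMap K h) :
    IsBilin K (fun m n => f (g m) (h n)) := by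
  constructor
  · intro m
    exact ⟨fun a b => by dsimp only; rw [hh.map_add, (hf.1 (g m)).map_add],
      fun c a => by dsimp only; rw [hh.map_smul, (hf.1 (g m)).map_smul]⟩
  · intro n
    refine ⟨fun a b => ?_, fun c a => ?_⟩
    · have := (hf.2 (h n)).map_add (g a) (g b)
      simpa [hg.map_add] using this
    · have := (hf.2 (h n)).map_smul c (g a)
      simpa [hg.map_smul] using this

/-- a Jordan bimodule deformed along commuting endomorphisms
becomes a BiHom-Jordan bimodule over the Yau twist A_{α,β}, which is itself a
BiHom-Jordan algebra. -/
theorem jordanBimodule_twist_is_biHomJordanBimodule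
    (K : Type*) [Field K] [CharZero K]
    {A V : Type*} [AddCommGroup A] [Module K A] [AddCommGroup V] [Module K V]
    (μ : A → A → A) (hJ : IsJordanAlg K μ)
    (ρl : A → V → V) (ρr : V → A → V)
    (hmod : IsJordanBimodule K μ ρl ρr)
    (α β : A → A) (hα : IsLinearMap K α) (hβ : IsLinearMap K β)
    (hαμ : ∀ x y, α (μ x y) = μ (α x) (α y))
    (hβμ : ∀ x y, β (μ x y) = μ (β x) (β y))
    (hαβ : ∀ x, α (β x) = β (α x))
    (φ ψ : V → V) (hφ : IsLinearMap K φ) (hψ : IsLinearMap K ψ)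
    (hφψ : ∀ v, φ (ψ v) = ψ (φ v))
    (hφρl : ∀ x v, φ (ρl x v) = ρl (α x) (φ v))
    (hφρr : ∀ v x, φ (ρr v x) = ρr (φ v) (α x))
    (hψρl : ∀ x v, ψ (ρl x v) = ρl (β x) (ψ v))
    (hψρr : ∀ v x, ψ (ρr v x) = ρr (ψ v) (β x)) :
    IsBiHomJordan K (fun x y => μ (α x) (β y)) α β ∧
    IsBiHomJordanBimodule K (fun x y => μ (α x) (β y)) α β φ ψ
      (fun x v => ρl (α x) (ψ v))
      (fun v x => ρr (φ v) (β x)) := by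
  obtain ⟨hμbil, hμcomm, hJid⟩ := hJ
  obtain ⟨hBl, hBr, hlr, hcyc, hax5⟩ := hmod
  constructor
  · refine ⟨isBilin_comp K hμbil hα hβ, hα, hβ, hαβ, ?_, ?_, ?_, ?_⟩
    · intro x y; simp only [hαμ, hαβ]
    · intro x y; simp only [hβμ, hαβ]
    · intro x y; simp only [hαβ]; exact hμcomm _ _
    · intro x y
      simp only [biHomAssoc, hαμ, hβμ, hαβ, sub_eq_zero]
      exact hJid _ _
  · refine ⟨⟨isBilin_comp K hBl hα hψ, isBilin_comp K hBr hφ hβ,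
      hφ, hψ, hφψ, ?_, ?_, ?_, ?_⟩, ?_, ?_, ?_⟩
    · intro x v; simp only [hφρl, hφψ, hαβ]
    · intro x v; simp only [hψρl, hαβ]
    · intro v x; simp only [hφρr, hφψ, hαβ]
    · intro v x; simp only [hψρr, hαβ, hφψ]
    · intro x v; simp only [hlr, hφψ, hαβ, hψρr, hφρr]
    · intro x y z v
      have h := hcyc (β (β (α (α (α x))))) (β (β (α (α (α y)))))
        (β (β (α (α (α z))))) (ψ (ψ (φ (φ (φ v)))))
      simp only [asVm, id_eq, hlr] at h
      simp only [asVm, hlr, hφρr, hψρr, hφψ, hαμ, hβμ, hαβ]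
      exact h
    · intro x y z v
      have h := hax5 (β (β (α (α (α x))))) (β (β (α (α (α y)))))
        (β (β (α (α (α z))))) (ψ (ψ (φ (φ (φ v)))))
      simp only [asVr, asVl, id_eq, hlr] at h
      simp only [asVr, asVl, hlr, hφρr, hψρr, hφψ, hαμ, hβμ, hαβ]
      exact h
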